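/- Let σ₁ : U → ℝ be differentiable. Then ∂₂σ₁ = H holds at every point of U if and only if there exists a differentiable function s₁ : I → ℝ such that σ₁(x, y) = −log|f_x(x, y)| + s₁(x) for all (x, y) ∈ U. Symmetrically, a differentiable σ₂ : U → ℝ satisfies ∂₁σ₂ = H on U if and only if σ₂(x, y) = −log|f_y(x, y)| + s₂(y) for some differentiable s₂ : J → ℝ. -/

import Mathlib

/-!
Put `g = σ₁ + log |f_x|`. Since `∂/∂y log |f_x| = f_xy / f_x`, the equation `∂₂σ₁ = H` is
equivalent (using `f_y ≠ 0`) to `g_y = 0` on `U`, and as every vertical slice of `U` is the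
interval `J`, this says exactly that `g(x, y) = s₁(x)`. The second equation is the first one for
`f ∘ swap` and `σ₂ ∘ swap`; the swap leaves `H` unchanged because `f_xy = f_yx` (Schwarz).
-/

open Set Filter Topology

/-- Partial derivative with respect to the first variable. -/
noncomputable def pdx (g : ℝ × ℝ → ℝ) (p : ℝ × ℝ) : ℝ :=
  deriv (fun x => g (x, p.2)) p.1

/-- Partial derivative with respect to the second variable. -/
noncomputable def pdy (g : ℝ × ℝ → ℝ) (p : ℝ × ℝ) : ℝ :=
  deriv (fun y => g (p.1, y)) p.2

/-- The web function `H = f_{xy} / (f_x f_y)`. -/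
noncomputable def Hf (f : ℝ × ℝ → ℝ) (p : ℝ × ℝ) : ℝ :=
  pdy (pdx f) p / (pdx f p * pdy f p)

section PartialDerivatives

variable {f g h : ℝ × ℝ → ℝ} {p : ℝ × ℝ}

lemma hasDerivAt_pdy (hg : DifferentiableAt ℝ g p) :
    HasDerivAt (fun y => g (p.1, y)) (pdy g p) p.2 :=
  (hg.comp p.2 ((differentiableAt_const _).prodMk differentiableAt_id)).hasDerivAt

lemma pdx_eq_fderiv (hg : DifferentiableAt ℝ g p) : pdx g p = fderiv ℝ g p (1, 0) :=
  (hg.hasFDerivAt.comp_hasDerivAt p.1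
    ((hasDerivAt_id p.1).prodMk (hasDerivAt_const p.1 p.2))).deriv

lemma pdy_eq_fderiv (hg : DifferentiableAt ℝ g p) : pdy g p = fderiv ℝ g p (0, 1) :=
  (hg.hasFDerivAt.comp_hasDerivAt p.2
    ((hasDerivAt_const p.2 p.1).prodMk (hasDerivAt_id p.2))).deriv

lemma Filter.EventuallyEq.pdx_eq (hgh : g =ᶠ[𝓝 p] h) : pdx g p = pdx h p :=
  (hgh.comp_tendsto ((continuous_id.prodMk continuous_const).tendsto p.1)).deriv_eq

lemma Filter.EventuallyEq.pdy_eq (hgh : g =ᶠ[𝓝 p] h) : pdy g p = pdy h p :=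
  (hgh.comp_tendsto ((continuous_const.prodMk continuous_id).tendsto p.2)).deriv_eq

lemma ContDiffAt.eventually_differentiableAt (hf : ContDiffAt ℝ 2 f p) :
    ∀ᶠ q in 𝓝 p, DifferentiableAt ℝ f q :=
  (hf.eventually (by simp)).mono fun _ hq => hq.differentiableAt (by norm_num)

lemma ContDiffAt.differentiableAt_fderiv (hf : ContDiffAt ℝ 2 f p) :
    DifferentiableAt ℝ (fderiv ℝ f) p :=
  (hf.fderiv_right (m := 1) (by norm_num)).differentiableAt one_ne_zero

lemma pdx_eventuallyEq_fderiv (hf : ContDiffAt ℝ 2 f p) :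
    pdx f =ᶠ[𝓝 p] fun q => fderiv ℝ f q (1, 0) :=
  hf.eventually_differentiableAt.mono fun _ hq => pdx_eq_fderiv hq

lemma pdy_eventuallyEq_fderiv (hf : ContDiffAt ℝ 2 f p) :
    pdy f =ᶠ[𝓝 p] fun q => fderiv ℝ f q (0, 1) :=
  hf.eventually_differentiableAt.mono fun _ hq => pdy_eq_fderiv hq

lemma ContDiffAt.differentiableAt_pdx (hf : ContDiffAt ℝ 2 f p) :
    DifferentiableAt ℝ (pdx f) p :=
  (hf.differentiableAt_fderiv.clm_apply (differentiableAt_const _)).congr_of_eventuallyEq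
    (pdx_eventuallyEq_fderiv hf)

lemma pdy_pdx_eq_fderiv_fderiv (hf : ContDiffAt ℝ 2 f p) :
    pdy (pdx f) p = fderiv ℝ (fderiv ℝ f) p (0, 1) (1, 0) := by
  have hf' := hf.differentiableAt_fderiv
  rw [(pdx_eventuallyEq_fderiv hf).pdy_eq,
    pdy_eq_fderiv (hf'.clm_apply (differentiableAt_const _)),
    fderiv_clm_apply hf' (differentiableAt_const _)]
  simp

lemma pdx_pdy_eq_fderiv_fderiv (hf : ContDiffAt ℝ 2 f p) :
    pdx (pdy f) p = fderiv ℝ (fderiv ℝ f) p (1, 0) (0, 1) := by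
  have hf' := hf.differentiableAt_fderiv
  rw [(pdy_eventuallyEq_fderiv hf).pdx_eq,
    pdx_eq_fderiv (hf'.clm_apply (differentiableAt_const _)),
    fderiv_clm_apply hf' (differentiableAt_const _)]
  simp

lemma pdy_pdx_eq_pdx_pdy (hf : ContDiffAt ℝ 2 f p) : pdy (pdx f) p = pdx (pdy f) p := by
  rw [pdy_pdx_eq_fderiv_fderiv hf, pdx_pdy_eq_fderiv_fderiv hf,
    (hf.isSymmSndFDerivAt (by simp)).eq]

lemma Hf_comp_swap (hf : ContDiffAt ℝ 2 f p) : Hf (f ∘ Prod.swap) p.swap = Hf f p := by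
  show pdx (pdy f) p / (pdy f p * pdx f p) = _
  rw [Hf, pdy_pdx_eq_pdx_pdy hf, mul_comm]

end PartialDerivatives

lemma pdy_eq_zero_iff_exists_eq_comp_fst {I J : Set ℝ} (hJ : IsOpen J) (hJc : IsPreconnected J)
    {g : ℝ × ℝ → ℝ} (hg : DifferentiableOn ℝ g (I ×ˢ J)) :
    (∀ p ∈ I ×ˢ J, pdy g p = 0) ↔
      ∃ s : ℝ → ℝ, DifferentiableOn ℝ s I ∧ ∀ p ∈ I ×ˢ J, g p = s p.1 := by
  constructor
  · intro h
    rcases J.eq_empty_or_nonempty with rfl | ⟨b, hb⟩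
    · exact ⟨0, differentiableOn_const 0, by simp⟩
    refine ⟨fun x => g (x, b),
      hg.comp (differentiableOn_id.prodMk (differentiableOn_const b)) fun x hx => ⟨hx, hb⟩, ?_⟩
    rintro ⟨x, y⟩ ⟨hx, hy⟩
    have hslice : DifferentiableOn ℝ (fun y => g (x, y)) J :=
      hg.comp ((differentiableOn_const x).prodMk differentiableOn_id) fun y hy => ⟨hx, hy⟩
    exact hJ.is_const_of_deriv_eq_zero hJc hslice (fun y hy => h (x, y) ⟨hx, hy⟩) hy hb
  · rintro ⟨s, -, hs⟩ p hp
    have hslice : (fun y => g (p.1, y)) =ᶠ[𝓝 p.2] fun _ => s p.1 := by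
      filter_upwards [hJ.mem_nhds hp.2] with y hy using hs (p.1, y) ⟨hp.1, hy⟩
    exact hslice.deriv_eq.trans (deriv_const _ _)

section Samuelson

variable {I J : Set ℝ} {f σ : ℝ × ℝ → ℝ}

lemma samuelson_first_iff (hI : IsOpen I) (hJ : IsOpen J) (hJc : IsPreconnected J)
    (hf : ContDiffOn ℝ 2 f (I ×ˢ J))
    (hfx : ∀ p ∈ I ×ˢ J, pdx f p ≠ 0) (hfy : ∀ p ∈ I ×ˢ J, pdy f p ≠ 0)
    (hσ : DifferentiableOn ℝ σ (I ×ˢ J)) :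
    (∀ p ∈ I ×ˢ J, -(pdy f p)⁻¹ * pdy σ p = Hf f p) ↔
      ∃ s : ℝ → ℝ, DifferentiableOn ℝ s I ∧
        ∀ p ∈ I ×ˢ J, σ p = -Real.log |pdx f p| + s p.1 := by
  have hU : IsOpen (I ×ˢ J) := hI.prod hJ
  have hσ_at : ∀ p ∈ I ×ˢ J, DifferentiableAt ℝ σ p := fun p hp =>
    hσ.differentiableAt (hU.mem_nhds hp)
  have hfx_at : ∀ p ∈ I ×ˢ J, DifferentiableAt ℝ (pdx f) p := fun p hp =>
    (hf.contDiffAt (hU.mem_nhds hp)).differentiableAt_pdx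
  set g : ℝ × ℝ → ℝ := fun q => σ q + Real.log |pdx f q|
  have hg : DifferentiableOn ℝ g (I ×ˢ J) := fun p hp => by
    simp only [g, Real.log_abs]
    exact ((hσ_at p hp).add ((hfx_at p hp).log (hfx p hp))).differentiableWithinAt
  have hpdy_g : ∀ p ∈ I ×ˢ J, pdy g p = pdy σ p + pdy (pdx f) p / pdx f p := fun p hp => by
    simp only [g, Real.log_abs]
    exact ((hasDerivAt_pdy (hσ_at p hp)).add
      ((hasDerivAt_pdy (hfx_at p hp)).log (hfx p hp))).deriv
  calc (∀ p ∈ I ×ˢ J, -(pdy f p)⁻¹ * pdy σ p = Hf f p)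
      ↔ ∀ p ∈ I ×ˢ J, pdy g p = 0 := forall₂_congr fun p hp => by
        rw [hpdy_g p hp, Hf]
        have := hfx p hp
        have := hfy p hp
        field_simp
        rw [mul_zero, neg_eq_iff_add_eq_zero]
    _ ↔ ∃ s : ℝ → ℝ, DifferentiableOn ℝ s I ∧ ∀ p ∈ I ×ˢ J, g p = s p.1 :=
        pdy_eq_zero_iff_exists_eq_comp_fst hJ hJc hg
    _ ↔ _ := by
        simp only [g, eq_neg_add_iff_add_eq, add_comm (Real.log _)]

lemma samuelson_second_iff (hI : IsOpen I) (hJ : IsOpen J) (hIc : IsPreconnected I)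
    (hf : ContDiffOn ℝ 2 f (I ×ˢ J))
    (hfx : ∀ p ∈ I ×ˢ J, pdx f p ≠ 0) (hfy : ∀ p ∈ I ×ˢ J, pdy f p ≠ 0)
    (hσ : DifferentiableOn ℝ σ (I ×ˢ J)) :
    (∀ p ∈ I ×ˢ J, -(pdx f p)⁻¹ * pdx σ p = Hf f p) ↔
      ∃ s : ℝ → ℝ, DifferentiableOn ℝ s J ∧
        ∀ p ∈ I ×ˢ J, σ p = -Real.log |pdy f p| + s p.2 := by
  have hU : IsOpen (I ×ˢ J) := hI.prod hJ
  have hswap : MapsTo Prod.swap (J ×ˢ I) (I ×ˢ J) := fun q hq => ⟨hq.2, hq.1⟩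
  have hfs := samuelson_first_iff hJ hI hIc
    (hf.comp (contDiff_snd.prodMk contDiff_fst).contDiffOn hswap)
    (fun q hq => hfy q.swap (hswap hq)) (fun q hq => hfx q.swap (hswap hq))
    (hσ.comp (differentiable_snd.prodMk differentiable_fst).differentiableOn hswap)
  rw [← image_swap_prod J I, forall_mem_image]
  simp_rw [forall_mem_image]
  refine Iff.trans (forall₂_congr fun q hq => ?_) hfs
  rw [← Hf_comp_swap (hf.contDiffAt (hU.mem_nhds (hswap hq)))]
  -- `pdy (g ∘ Prod.swap) q` unfolds to `pdx g q.swap`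
  rfl

end Samuelson

/-- General solutions of the first two Samuelson equations:
a differentiable `σ₁` satisfies `∂₂σ₁ = H` on `U` iff
`σ₁(x,y) = -log|f_x(x,y)| + s₁(x)` for some differentiable `s₁ : I → ℝ`;
symmetrically, `∂₁σ₂ = H` on `U` iff `σ₂(x,y) = -log|f_y(x,y)| + s₂(y)`
for some differentiable `s₂ : J → ℝ`. -/
theorem samuelson_first_equations_solutions
    (I J : Set ℝ) (hI : IsOpen I) (hJ : IsOpen J)
    (hIc : I.OrdConnected) (hJc : J.OrdConnected)
    (f : ℝ × ℝ → ℝ) (hf : ContDiffOn ℝ (⊤ : ℕ∞) f (I ×ˢ J))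
    (hfx : ∀ p ∈ I ×ˢ J, pdx f p ≠ 0) (hfy : ∀ p ∈ I ×ˢ J, pdy f p ≠ 0)
    (σ₁ σ₂ : ℝ × ℝ → ℝ)
    (hσ₁ : DifferentiableOn ℝ σ₁ (I ×ˢ J)) (hσ₂ : DifferentiableOn ℝ σ₂ (I ×ˢ J)) :
    ((∀ p ∈ I ×ˢ J, -(pdy f p)⁻¹ * pdy σ₁ p = Hf f p) ↔
      ∃ s₁ : ℝ → ℝ, DifferentiableOn ℝ s₁ I ∧
        ∀ p ∈ I ×ˢ J, σ₁ p = -Real.log |pdx f p| + s₁ p.1) ∧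
    ((∀ p ∈ I ×ˢ J, -(pdx f p)⁻¹ * pdx σ₂ p = Hf f p) ↔
      ∃ s₂ : ℝ → ℝ, DifferentiableOn ℝ s₂ J ∧
        ∀ p ∈ I ×ˢ J, σ₂ p = -Real.log |pdy f p| + s₂ p.2) := by
  have hf₂ : ContDiffOn ℝ 2 f (I ×ˢ J) := hf.of_le (by norm_cast)
  exact ⟨samuelson_first_iff hI hJ hJc.isPreconnected hf₂ hfx hfy hσ₁,
    samuelson_second_iff hI hJ hIc.isPreconnected hf₂ hfx hfy hσ₂⟩
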